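/- If the 3CM M does not halt, then for every X ∈ {O, SO, R, E} and every fair X-derivation D from ⟨R_M, {End(w)}⟩, the R₀-graph of res(D) contains an infinite clique: there is an infinite set V of terms of res(D) such that R₀(a, b) ∈ res(D) for all a, b ∈ V. -/

import Mathlib

set_option maxHeartbeats 1000000
set_option synthInstance.maxHeartbeats 1000000
set_option synthInstance.maxSize 512

attribute [local instance] Classical.propDecidable

noncomputable section

/-! ### Terms and atoms -/

/-- Variables: ordinary variables `Sum.inl n`, or fresh variables `Sum.inr (c, k)`
introduced by the trigger with code `c` for the head variable with code `k`. -/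
abbrev Var : Type := ℕ ⊕ (ℕ × ℕ)

/-- Terms: constants `Sum.inl c` or variables `Sum.inr v`. -/
abbrev FTerm : Type := ℕ ⊕ Var

def ct (n : ℕ) : FTerm := Sum.inl n
def vt (n : ℕ) : FTerm := Sum.inr (Sum.inl n)

/-- An atom: a predicate name together with its list of arguments. -/
abbrev Atom : Type := ℕ × List FTerm

/-- Active domain: all terms occurring in an atom set. -/
def adom (J : Set Atom) : Set FTerm := {t | ∃ a ∈ J, t ∈ a.2}

def atomVarsF (a : Atom) : Finset Var := (a.2.filterMap Sum.getRight?).toFinset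

def varsF (A : Finset Atom) : Finset Var := A.biUnion atomVarsF

def setVars (J : Set Atom) : Set Var := {v | ∃ a ∈ J, Sum.inr v ∈ a.2}

/-! ### Substitutions and homomorphisms -/

abbrev Subst := Var → FTerm

def applyT (σ : Subst) : FTerm → FTerm
  | Sum.inl c => Sum.inl c
  | Sum.inr v => σ v

def applyA (σ : Subst) (a : Atom) : Atom := (a.1, a.2.map (applyT σ))

def IsHomOn (σ : Subst) (A B : Set Atom) : Prop := ∀ a ∈ A, applyA σ a ∈ B

def HomBetween (A B : Set Atom) : Prop := ∃ σ : Subst, IsHomOn σ A B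

def IsRetraction (σ : Subst) (A B : Set Atom) : Prop :=
  IsHomOn σ A B ∧ ∀ v ∈ setVars A ∩ setVars B, σ v = Sum.inr v

/-- Isomorphism of atom sets: a pair of mutually inverse homomorphisms. -/
def Isomorphic (A B : Set Atom) : Prop :=
  ∃ σ τ : Subst, IsHomOn σ A B ∧ IsHomOn τ B A ∧
    (∀ a ∈ A, applyA τ (applyA σ a) = a) ∧ (∀ b ∈ B, applyA σ (applyA τ b) = b)

/-! ### Rules -/

/-- A rule is a pair (body, head). Its existential variables are the head variables
not occurring in the body; its frontier the variables shared by body and head.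
A rule is Datalog when every head variable occurs in the body. -/
abbrev Rule : Type := Finset Atom × Finset Atom

def frontierOf (R : Rule) : Finset Var := varsF R.1 ∩ varsF R.2

def DatRules (Rset : Finset Rule) : Finset Rule := Rset.filter fun R => varsF R.2 ⊆ varsF R.1
def NDatRules (Rset : Finset Rule) : Finset Rule := Rset.filter fun R => ¬ varsF R.2 ⊆ varsF R.1

/-- Satisfaction of a rule in an atom set. -/
def SatisfiesRule (J : Set Atom) (R : Rule) : Prop :=
  ∀ σ : Subst, IsHomOn σ (R.1 : Set Atom) J →
    ∃ σ' : Subst, (∀ v ∈ varsF R.1, σ' v = σ v) ∧ IsHomOn σ' (R.2 : Set Atom) J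

def IsModel (Rset : Finset Rule) (I J : Set Atom) : Prop :=
  (∀ R ∈ Rset, SatisfiesRule J R) ∧ HomBetween I J

/-- BCQ entailment: every model of the KB satisfies the query. -/
def Entails (Rset : Finset Rule) (I q : Set Atom) : Prop :=
  ∀ J : Set Atom, IsModel Rset I J → HomBetween q J

def IsUniversalModel (Rset : Finset Rule) (I U : Set Atom) : Prop :=
  IsModel Rset I U ∧ ∀ J : Set Atom, IsModel Rset I J → HomBetween U J

/-! ### Triggers -/

structure Trigger where
  rule : Rule
  sub : Subst

/-- Injective code of a trigger (a trigger is determined by its rule and the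
restriction of its substitution to the body variables). -/
def Trigger.code (t : Trigger) : ℕ :=
  Encodable.encode (t.rule, (varsF t.rule.1).image fun v => (v, t.sub v))

/-- The canonical extension of the trigger substitution, mapping each existential
variable `z` to the fresh variable unique for `z` and the trigger. -/
def Trigger.extSub (t : Trigger) : Subst := fun v =>
  if v ∈ varsF t.rule.1 then t.sub v
  else Sum.inr (Sum.inr (t.code, Encodable.encode v))

def Trigger.out (t : Trigger) : Finset Atom := t.rule.2.image (applyA t.extSub)

def Trigger.isOn (t : Trigger) (J : Set Atom) : Prop := IsHomOn t.sub (t.rule.1 : Set Atom) J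

/-! ### Chase variants, derivations, chase termination classes -/

inductive ChaseVariant : Type
  | O | SO | R | E
deriving DecidableEq

def Applicable : ChaseVariant → Trigger → Set Atom → Prop
  | .O, t, J => ¬ ((t.out : Set Atom) ⊆ J)
  | .SO, t, J => ∀ t' : Trigger, t'.rule = t.rule → t'.isOn J →
      (∀ v ∈ frontierOf t.rule, t'.sub v = t.sub v) → ¬ ((t'.out : Set Atom) ⊆ J)
  | .R, t, J => ¬ ∃ σ : Subst, IsRetraction σ (J ∪ (t.out : Set Atom)) J
  | .E, t, J => ¬ ∃ σ : Subst, IsHomOn σ (J ∪ (t.out : Set Atom)) J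

def instSeq (I : Set Atom) (steps : ℕ → Option Trigger) : ℕ → Set Atom
  | 0 => I
  | n + 1 => instSeq I steps n ∪
      (match steps n with
        | none => (∅ : Set Atom)
        | some t => (t.out : Set Atom))

/-- A (possibly infinite) derivation from the knowledge base `⟨Rset, I⟩`. -/
structure Deriv (Rset : Finset Rule) (I : Set Atom) where
  steps : ℕ → Option Trigger
  prefix_closed : ∀ n, steps n = none → steps (n + 1) = none
  valid : ∀ n t, steps n = some t →
    t.rule ∈ Rset ∧ t.isOn (instSeq I steps n) ∧ ¬ ((t.out : Set Atom) ⊆ instSeq I steps n)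

def Deriv.inst {Rset : Finset Rule} {I : Set Atom} (D : Deriv Rset I) (n : ℕ) :
    Set Atom := instSeq I D.steps n

def Deriv.res {Rset : Finset Rule} {I : Set Atom} (D : Deriv Rset I) : Set Atom :=
  ⋃ n, D.inst n

def Deriv.Finite {Rset : Finset Rule} {I : Set Atom} (D : Deriv Rset I) : Prop :=
  ∃ n, D.steps n = none

def Deriv.IsX {Rset : Finset Rule} {I : Set Atom} (X : ChaseVariant)
    (D : Deriv Rset I) : Prop :=
  ∀ n t, D.steps n = some t → Applicable X t (D.inst n)

def Deriv.Fair {Rset : Finset Rule} {I : Set Atom} (X : ChaseVariant)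
    (D : Deriv Rset I) : Prop :=
  ∀ i, ∀ t : Trigger, t.rule ∈ Rset → t.isOn (D.inst i) → Applicable X t (D.inst i) →
    ∃ j, i < j ∧ ¬ Applicable X t (D.inst j)

/-- All-instance, all-derivation chase termination. -/
def CTall (X : ChaseVariant) (Rset : Finset Rule) : Prop :=
  ∀ I : Finset Atom, ∀ D : Deriv Rset (I : Set Atom), D.IsX X → D.Fair X → D.Finite

/-- All-instance, some-derivation chase termination. -/
def CTex (X : ChaseVariant) (Rset : Finset Rule) : Prop :=
  ∀ I : Finset Atom, ∃ D : Deriv Rset (I : Set Atom), D.IsX X ∧ D.Fair X ∧ D.Finite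

inductive CTQuant : Type
  | all | ex

def CT (X : ChaseVariant) : CTQuant → Finset Rule → Prop
  | .all => CTall X
  | .ex => CTex X

/-- The result of some fair `X`-derivation from `⟨Rset, J⟩`. -/
def ChX (X : ChaseVariant) (Rset : Finset Rule) (J : Set Atom) : Set Atom :=
  if h : ∃ D : Deriv Rset J, D.IsX X ∧ D.Fair X then h.choose.res else J

/-! ### Gaifman graph, treewidth, bts -/

def gaifmanAdj (J : Set Atom) (u v : FTerm) : Prop :=
  u ≠ v ∧ ∃ a ∈ J, u ∈ a.2 ∧ v ∈ a.2

/-- The (Gaifman graph of the) atom set `J` has treewidth at most `k`: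
there is a tree decomposition all of whose bags have size at most `k + 1`. -/
def TreewidthAtMost (J : Set Atom) (k : ℕ) : Prop :=
  ∃ (ι : Type) (T : SimpleGraph ι) (bag : ι → Finset FTerm),
    T.Connected ∧ T.IsAcyclic ∧
    (∀ v ∈ adom J, ∃ i, v ∈ bag i) ∧
    (∀ u v : FTerm, gaifmanAdj J u v → ∃ i, u ∈ bag i ∧ v ∈ bag i) ∧
    (∀ v : FTerm, (SimpleGraph.induce {i | v ∈ bag i} T).Preconnected) ∧
    (∀ i, (bag i).card ≤ k + 1)

/-- Bounded-treewidth sets: for every instance, some universal model of bounded treewidth. -/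
def IsBts (Rset : Finset Rule) : Prop :=
  ∀ I : Finset Atom, ∃ (k : ℕ) (U : Set Atom),
    IsUniversalModel Rset (I : Set Atom) U ∧ TreewidthAtMost U k

/-! ### Three-counter machines -/

/-- A three-counter machine: states `0, …, m − 1` (state `0` is initial, standing for `q₁`),
and a partial transition function given by a finite table. -/
structure TCM where
  m : ℕ
  hm : 0 < m
  δ : List ((ℕ × Bool × Bool) × (ℕ × Int × Int))
  keys_nodup : (δ.map Prod.fst).Nodup
  wf : ∀ e ∈ δ, e.1.1 < m ∧ e.2.1 < m ∧ e.2.2.1.natAbs ≤ 1 ∧ e.2.2.2.natAbs ≤ 1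

/-- A configuration: state, two counters, and the time counter. -/
abbrev Config : Type := ℕ × ℕ × ℕ × ℕ

def TCM.step (M : TCM) (q : ℕ) (b1 b2 : Bool) : Option (ℕ × Int × Int) :=
  (M.δ.find? fun e => decide (e.1 = (q, b1, b2))).map Prod.snd

def TCM.next (M : TCM) (C : Config) : Option Config :=
  match M.step C.1 (decide (C.2.1 ≠ 0)) (decide (C.2.2.1 ≠ 0)) with
  | none => none
  | some (q', d1, d2) =>
      some (q', ((C.2.1 : ℤ) + d1).toNat, ((C.2.2.1 : ℤ) + d2).toNat, C.2.2.2 + 1)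

def TCM.run (M : TCM) : ℕ → Option Config
  | 0 => some (0, 0, 0, 0)
  | n + 1 => (M.run n).bind M.next

/-- The machine halts: some reachable configuration has no successor. -/
def TCM.Halts (M : TCM) : Prop := ∃ n C, M.run n = some C ∧ M.next C = none

/-! ### Prime encoding of configurations -/

/-- The least prime strictly greater than `n` (computably). -/
def nextPrime (n : ℕ) : ℕ := Nat.find (Nat.exists_infinite_primes (n + 1))

/-- `prm i` is the `(i+1)`-st prime `p_{i+1}`, i.e. `prm 0 = 2`. -/
def prm : ℕ → ℕ
  | 0 => 2
  | k + 1 => nextPrime (prm k)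

/-- Encoding of a configuration as a natural number. -/
def TCM.enc (M : TCM) (C : Config) : ℕ :=
  prm C.1 * prm M.m ^ C.2.1 * prm (M.m + 1) ^ C.2.2.1 * prm (M.m + 2) ^ C.2.2.2

/-- `p = p₁ ⋯ p_{m+3}`. -/
def TCM.p (M : TCM) : ℕ := ∏ i ∈ Finset.range (M.m + 3), prm i

/-- Decode the state from a residue modulo `M.p`. -/
def TCM.stateOf (M : TCM) (i : ℕ) : Option ℕ :=
  (List.range M.m).find? fun s => decide (prm s ∣ i)

/-- The canonical pair `(q_i, r_i)` realizing the prime encoding of the transitions. -/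
def TCM.qr (M : TCM) (i : ℕ) : ℕ × ℕ :=
  match M.stateOf i with
  | none => (1, 1)
  | some s =>
      let b1 : Bool := decide (prm M.m ∣ i)
      let b2 : Bool := decide (prm (M.m + 1) ∣ i)
      match M.step s b1 b2 with
      | none => (1, 1)
      | some (s', d1, d2) =>
          let e1 : ℤ := if b1 then d1 else max d1 0
          let e2 : ℤ := if b2 then d2 else max d2 0
          let num : ℕ := prm s' * prm (M.m + 2) *
            (if e1 = 1 then prm M.m else 1) * (if e2 = 1 then prm (M.m + 1) else 1)
          let den : ℕ := prm s *
            (if e1 = -1 then prm M.m else 1) * (if e2 = -1 then prm (M.m + 1) else 1)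
          (num / Nat.gcd num den, den / Nat.gcd num den)

def TCM.qi (M : TCM) (i : ℕ) : ℕ := (M.qr i).1
def TCM.ri (M : TCM) (i : ℕ) : ℕ := (M.qr i).2

/-- `g(n) = q_{n mod p} · n / r_{n mod p}`. -/
def TCM.g (M : TCM) (n : ℕ) : ℕ := M.qi (n % M.p) * n / M.ri (n % M.p)

/-- `gᵏ(2)`. -/
def TCM.gIter (M : TCM) (k : ℕ) : ℕ := (M.g)^[k] 2

/-- `G = {gᵏ(2) : k ∈ ℕ}`. -/
def TCM.Gset (M : TCM) : Set ℕ := Set.range M.gIter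

/-! ### The rule set `R_M` -/

def pEnd : ℕ := 0
def pFlood : ℕ := 1
def pS0 : ℕ := 2
def pS : ℕ := 3
def pG : ℕ := 4
def pR (i : ℕ) : ℕ := 5 + 2 * i
def pT (i : ℕ) : ℕ := 6 + 2 * i

/-- `j`-th vertex of an `S`-path of length `n` from variable `a` to variable `b`
with fresh intermediate variables `base + 1, …, base + n − 1`. -/
def pathVar (a b base n j : ℕ) : FTerm :=
  if j = 0 then vt a else if j = n then vt b else vt (base + j)

/-- The atoms of `Sⁿ(x_a, x_b)`: an `S`-path of length `n`. -/
def spath (a b base n : ℕ) : Finset Atom :=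
  (Finset.range n).image fun j =>
    (pS, [pathVar a b base n j, pathVar a b base n (j + 1)])

/-- Rule (1): `S₀(x,y) → S(x,y)`. -/
def ruleS : Rule := ({(pS0, [vt 0, vt 1])}, {(pS, [vt 0, vt 1])})

/-- Rule (2): `R_i(x,y) ∧ S(y,z) → R_{i+1}(x,z)` (indices modulo `p`). -/
def ruleR (M : TCM) (i : ℕ) : Rule :=
  ({(pR i, [vt 0, vt 1]), (pS, [vt 1, vt 2])}, {(pR ((i + 1) % M.p), [vt 0, vt 2])})

/-- Rule (3): `T_i(x,y,z) ∧ S^{r_i}(y,y′) ∧ S^{q_i}(z,z′) → T_i(x,y′,z′)`. -/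
def ruleT (M : TCM) (i : ℕ) : Rule :=
  (({(pT i, [vt 0, vt 1, vt 2])} : Finset Atom) ∪ spath 1 3 10 (M.ri i) ∪
      spath 2 4 (11 + M.ri i) (M.qi i),
    {(pT i, [vt 0, vt 3, vt 4])})

/-- Rule (4): `S(x,y) → Flood(y)`. -/
def ruleFloodProp : Rule := ({(pS, [vt 0, vt 1])}, {(pFlood, [vt 1])})

/-- Rule (5): `End(x) → S(x,x)`. -/
def ruleSEnd : Rule := ({(pEnd, [vt 0])}, {(pS, [vt 0, vt 0])})

/-- Rule (6): `S²(x,y) → G(x,y)`. -/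
def ruleGInit : Rule := (spath 0 1 10 2, {(pG, [vt 0, vt 1])})

/-- Rule (7): `G(x,y) ∧ R_i(x,y) ∧ T_i(x,y,z) → G(x,z)`. -/
def ruleGStep (i : ℕ) : Rule :=
  ({(pG, [vt 0, vt 1]), (pR i, [vt 0, vt 1]), (pT i, [vt 0, vt 1, vt 2])},
    {(pG, [vt 0, vt 2])})

/-- Rule (8): `Flood(x) ∧ Flood(y) ∧ Flood(z) → G(x,y) ∧ ⋀_{j<p} (R_j(x,y) ∧ T_j(x,y,z))`. -/
def ruleFloodGen (M : TCM) : Rule :=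
  ({(pFlood, [vt 0]), (pFlood, [vt 1]), (pFlood, [vt 2])},
    ({(pG, [vt 0, vt 1])} : Finset Atom) ∪
      (Finset.range M.p).biUnion fun j =>
        {(pR j, [vt 0, vt 1]), (pT j, [vt 0, vt 1, vt 2])})

/-- Rule (9): `G(y,z) ∧ End(z) → ∃x (S₀(x,y) ∧ R₀(x,x) ∧ ⋀_{j<p} T_j(x,x,x))`. -/
def ruleEx (M : TCM) : Rule :=
  ({(pG, [vt 1, vt 2]), (pEnd, [vt 2])},
    ({(pS0, [vt 0, vt 1]), (pR 0, [vt 0, vt 0])} : Finset Atom) ∪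
      (Finset.range M.p).biUnion fun j => {(pT j, [vt 0, vt 0, vt 0])})

/-- The rule set `R_M`. -/
def RM (M : TCM) : Finset Rule :=
  ({ruleS, ruleFloodProp, ruleSEnd, ruleGInit, ruleFloodGen M, ruleEx M} : Finset Rule) ∪
    (Finset.range M.p).biUnion fun i => {ruleR M i, ruleT M i, ruleGStep i}

/-- The alternating Datalog/non-Datalog chase steps `Step^X_n`. -/
def StepX (X : ChaseVariant) (M : TCM) : ℕ → Set Atom → Set Atom
  | 0, I => ChX X (DatRules (RM M)) I
  | n + 1, I => ChX X (DatRules (RM M)) (ChX X (NDatRules (RM M)) (StepX X M n I))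

/-- The constant `w`, the "well of positivity". -/
def wC : FTerm := ct 0

/-- The instance `{End(w)}`. -/
def IE : Set Atom := {(pEnd, [wC])}

/-- Membership in the signature of `R_M` (predicate together with its arity). -/
def InSig (M : TCM) (a : Atom) : Prop :=
  ((a.1 = pEnd ∨ a.1 = pFlood) ∧ a.2.length = 1) ∨
  ((a.1 = pS0 ∨ a.1 = pS ∨ a.1 = pG ∨ ∃ i < M.p, a.1 = pR i) ∧ a.2.length = 2) ∨
  ((∃ i < M.p, a.1 = pT i) ∧ a.2.length = 3)

/-- The critical instance: all atoms `P(w, …, w)` over the signature of `R_M`. -/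
def Crit (M : TCM) : Set Atom := {a | InSig M a ∧ ∀ t ∈ a.2, t = wC}

/-- An `S`-path of length `k` from `s` to `t` in `J`. -/
def SPath (J : Set Atom) : ℕ → FTerm → FTerm → Prop
  | 0, s, t => s = t
  | k + 1, s, t => ∃ u, (pS, [s, u]) ∈ J ∧ SPath J k u t

/-- The restriction `J|_S`: atoms of `J` all of whose terms belong to `S`. -/
def restrictTo (J : Set Atom) (S : Set FTerm) : Set Atom := {a ∈ J | ∀ t ∈ a.2, t ∈ S}

/-- An explicit injective encoding of three-counter machines by natural numbers. -/
def encodeTCM (M : TCM) : ℕ := Encodable.encode (M.m, M.δ)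


/-!
If `M` does not halt, the orbit `gᵗ(2)` consists of the encodings of the successive
configurations of `M`, and along it every division in `g` is exact. In an atom set that contains
`End(w)` and is closed under the triggers of `R_M`, rule (9) therefore produces an infinite chain
`w = e₀, e₁, e₂, …` of nulls with `S₀(eₖ₊₁, eₖ)`: below `eₖ`, rules (6) and (7) walk down the
`S`-chain along the orbit (`Rᵢ` tracks the residue of the offset mod `p`, `Tᵢ` performs
`n ↦ qᵢ n / rᵢ`), and as `gᵏ(2) > k` they reach `w`, giving `G(eₖ, w)` and hence `eₖ₊₁`. All `eₖ`
are flooded, so rule (8) makes them an `R₀`-clique.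

The result of a fair derivation is closed in this sense for each of the four chase variants:
every instance along the derivation lives on the chain, each `eₖ₊₁` being pinned down by its
unique `S₀` atom, so every endomorphism is the identity. A trigger that is not applicable has
then already produced its output, and fairness does the rest.
-/

/-! ### Arithmetic of the prime encoding -/

lemma prm_prime (k : ℕ) : (prm k).Prime := by
  cases k with
  | zero => exact Nat.prime_two
  | succ k => exact (Nat.find_spec (Nat.exists_infinite_primes (prm k + 1))).2

lemma prm_strictMono : StrictMono prm :=
  strictMono_nat_of_lt_succ fun k => (Nat.find_spec (Nat.exists_infinite_primes (prm k + 1))).1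

lemma prm_pos (k : ℕ) : 0 < prm k := (prm_prime k).pos

lemma ite_prm_pos (p : Prop) [Decidable p] (k : ℕ) : 0 < if p then prm k else 1 := by
  split_ifs <;> simp [prm_pos]

lemma prm_dvd_prm_iff {j k : ℕ} : prm j ∣ prm k ↔ j = k :=
  (Nat.prime_dvd_prime_iff_eq (prm_prime j) (prm_prime k)).trans prm_strictMono.injective.eq_iff

lemma prm_dvd_prm_pow_iff {j k c : ℕ} : prm j ∣ prm k ^ c ↔ j = k ∧ c ≠ 0 := by
  rcases eq_or_ne c 0 with rfl | hc
  · simp [(prm_prime j).ne_one]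
  · rw [(prm_prime j).prime.dvd_pow_iff_dvd hc, prm_dvd_prm_iff]
    exact ⟨fun h => ⟨h, hc⟩, And.left⟩

lemma List.find?_eq_some_of_unique {α : Type*} {l : List α} {p : α → Bool} {a : α}
    (ha : a ∈ l) (hpa : p a) (huniq : ∀ b ∈ l, p b → b = a) : l.find? p = some a := by
  obtain ⟨b, hb⟩ := Option.isSome_iff_exists.1 (List.find?_isSome.2 ⟨a, ha, hpa⟩)
  rwa [huniq b (List.mem_of_find?_eq_some hb) (List.find?_some hb)] at hb

lemma counter_factor (P c : ℕ) {d : ℤ} (hd : d.natAbs ≤ 1) {b : Bool} (hb : b = decide (c ≠ 0)) :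
    (if (if b then d else max d 0) = 1 then P else 1) * P ^ c =
        (if (if b then d else max d 0) = -1 then P else 1) * P ^ ((c : ℤ) + d).toNat ∧
      (if (if b then d else max d 0) = -1 then P else 1) ∣ P ^ c := by
  subst hb
  rcases eq_or_ne c 0 with rfl | hc
  · rcases (by omega : d = -1 ∨ d = 0 ∨ d = 1) with rfl | rfl | rfl <;> simp
  obtain ⟨c, rfl⟩ := Nat.exists_eq_add_one_of_ne_zero hc
  rcases (by omega : d = -1 ∨ d = 0 ∨ d = 1) with rfl | rfl | rfl
  · simp [pow_succ, mul_comm]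
  · simp
  · simp [show ((c : ℤ) + 1 + 1).toNat = c + 1 + 1 by omega, pow_succ, mul_comm]

lemma reduced_fraction_mul_div {num den n n' : ℕ} (hden : 0 < den) (hdvd : den ∣ n)
    (heq : num * n = den * n') :
    den / num.gcd den ∣ n ∧ num / num.gcd den * n / (den / num.gcd den) = n' := by
  have hg : 0 < num.gcd den := Nat.gcd_pos_of_pos_right _ hden
  refine ⟨(Nat.div_dvd_of_dvd (Nat.gcd_dvd_right _ _)).trans hdvd, ?_⟩
  have hcancel : num / num.gcd den * n = den / num.gcd den * n' := by
    apply Nat.eq_of_mul_eq_mul_right hg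
    rw [mul_right_comm, Nat.div_mul_cancel (Nat.gcd_dvd_left _ _), heq, mul_right_comm,
      Nat.div_mul_cancel (Nat.gcd_dvd_right _ _)]
  rw [hcancel, Nat.mul_div_cancel_left _ (Nat.div_gcd_pos_of_pos_right _ hden)]

namespace TCM

variable (M : TCM)

lemma enc_eq (q c1 c2 tm : ℕ) :
    M.enc (q, c1, c2, tm) = prm q * prm M.m ^ c1 * prm (M.m + 1) ^ c2 * prm (M.m + 2) ^ tm := rfl

lemma prm_dvd_enc_iff {j q c1 c2 tm : ℕ} :
    prm j ∣ M.enc (q, c1, c2, tm) ↔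
      j = q ∨ (j = M.m ∧ c1 ≠ 0) ∨ (j = M.m + 1 ∧ c2 ≠ 0) ∨ (j = M.m + 2 ∧ tm ≠ 0) := by
  simp only [enc_eq, (prm_prime j).dvd_mul, prm_dvd_prm_iff, prm_dvd_prm_pow_iff, or_assoc]

lemma mul_enc_eq {q q' c1 c1' c2 c2' tm A1 B1 A2 B2 : ℕ}
    (h1 : A1 * prm M.m ^ c1 = B1 * prm M.m ^ c1')
    (h2 : A2 * prm (M.m + 1) ^ c2 = B2 * prm (M.m + 1) ^ c2') :
    prm q' * prm (M.m + 2) * A1 * A2 * M.enc (q, c1, c2, tm) =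
      prm q * B1 * B2 * M.enc (q', c1', c2', tm + 1) := by
  rw [enc_eq, enc_eq, pow_succ]
  linear_combination
    (prm q' * prm q * prm (M.m + 2) ^ tm * prm (M.m + 2) * A2 * prm (M.m + 1) ^ c2) * h1 +
    (prm q' * prm q * prm (M.m + 2) ^ tm * prm (M.m + 2) * B1 * prm M.m ^ c1') * h2

lemma prm_dvd_p {j : ℕ} (h : j < M.m + 3) : prm j ∣ M.p :=
  Finset.dvd_prod_of_mem _ (Finset.mem_range.2 h)

lemma p_pos : 0 < M.p := Finset.prod_pos fun i _ => prm_pos i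

lemma one_lt_p : 1 < M.p :=
  lt_of_lt_of_le (prm_prime 0).one_lt (Nat.le_of_dvd M.p_pos (M.prm_dvd_p (by omega)))

lemma step_wf {q q' : ℕ} {b1 b2 : Bool} {d1 d2 : ℤ} (h : M.step q b1 b2 = some (q', d1, d2)) :
    q' < M.m ∧ d1.natAbs ≤ 1 ∧ d2.natAbs ≤ 1 := by
  obtain ⟨e, he, hed⟩ := Option.map_eq_some_iff.1 h
  have := (M.wf e (List.mem_of_find?_eq_some he)).2
  rwa [hed] at this

lemma next_eq_some {C C' : Config} (h : M.next C = some C') :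
    ∃ q' d1 d2, M.step C.1 (decide (C.2.1 ≠ 0)) (decide (C.2.2.1 ≠ 0)) = some (q', d1, d2) ∧
      C' = (q', ((C.2.1 : ℤ) + d1).toNat, ((C.2.2.1 : ℤ) + d2).toNat, C.2.2.2 + 1) := by
  unfold TCM.next at h
  split at h
  · cases h
  · exact ⟨_, _, _, ‹_›, (Option.some_inj.1 h).symm⟩

section Residue

variable {q c1 c2 tm : ℕ}

lemma prm_dvd_enc_mod_iff {j : ℕ} (hj : j < M.m + 3) :
    prm j ∣ M.enc (q, c1, c2, tm) % M.p ↔ prm j ∣ M.enc (q, c1, c2, tm) :=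
  Nat.dvd_mod_iff (M.prm_dvd_p hj)

lemma stateOf_enc (hq : q < M.m) : M.stateOf (M.enc (q, c1, c2, tm) % M.p) = some q := by
  have hprm : ∀ s < M.m, prm s ∣ M.enc (q, c1, c2, tm) % M.p ↔ s = q := fun s hs => by
    rw [M.prm_dvd_enc_mod_iff (by omega), M.prm_dvd_enc_iff]
    omega
  refine List.find?_eq_some_of_unique (List.mem_range.2 hq) (by simpa using (hprm q hq).2 rfl) ?_
  intro s hs hps
  exact (hprm s (List.mem_range.1 hs)).1 (by simpa using hps)

lemma decide_prm_m_dvd_enc_mod (hq : q < M.m) :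
    decide (prm M.m ∣ M.enc (q, c1, c2, tm) % M.p) = decide (c1 ≠ 0) := by
  rw [decide_eq_decide, M.prm_dvd_enc_mod_iff (by omega), M.prm_dvd_enc_iff]
  omega

lemma decide_prm_m_succ_dvd_enc_mod (hq : q < M.m) :
    decide (prm (M.m + 1) ∣ M.enc (q, c1, c2, tm) % M.p) = decide (c2 ≠ 0) := by
  rw [decide_eq_decide, M.prm_dvd_enc_mod_iff (by omega), M.prm_dvd_enc_iff]
  omega

lemma exists_qr_enc {C' : Config} (hq : q < M.m) (hnext : M.next (q, c1, c2, tm) = some C') :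
    ∃ num den : ℕ, M.qr (M.enc (q, c1, c2, tm) % M.p) = (num / num.gcd den, den / num.gcd den) ∧
      0 < den ∧ den ∣ M.enc (q, c1, c2, tm) ∧ num * M.enc (q, c1, c2, tm) = den * M.enc C' := by
  obtain ⟨q', d1, d2, hstep, rfl⟩ := M.next_eq_some hnext
  obtain ⟨-, hd1, hd2⟩ := M.step_wf hstep
  have hs := M.stateOf_enc (c1 := c1) (c2 := c2) (tm := tm) hq
  have hb1 := M.decide_prm_m_dvd_enc_mod (c1 := c1) (c2 := c2) (tm := tm) hq
  have hb2 := M.decide_prm_m_succ_dvd_enc_mod (c1 := c1) (c2 := c2) (tm := tm) hq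
  generalize M.enc (q, c1, c2, tm) % M.p = i at hs hb1 hb2
  obtain ⟨h1, h1dvd⟩ := counter_factor (prm M.m) c1 hd1 hb1
  obtain ⟨h2, h2dvd⟩ := counter_factor (prm (M.m + 1)) c2 hd2 hb2
  dsimp only at hstep ⊢
  rw [← hb1, ← hb2] at hstep
  unfold TCM.qr
  simp only [hs, hstep]
  refine ⟨_, _, rfl, by apply_rules [Nat.mul_pos, prm_pos, ite_prm_pos], ?_, M.mul_enc_eq h1 h2⟩
  rw [enc_eq]
  exact Dvd.dvd.mul_right (mul_dvd_mul (mul_dvd_mul dvd_rfl h1dvd) h2dvd) _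

lemma g_enc {C' : Config} (hq : q < M.m) (hnext : M.next (q, c1, c2, tm) = some C') :
    M.ri (M.enc (q, c1, c2, tm) % M.p) ∣ M.enc (q, c1, c2, tm) ∧
      M.g (M.enc (q, c1, c2, tm)) = M.enc C' := by
  obtain ⟨num, den, hqr, hden, hdvd, heq⟩ := M.exists_qr_enc hq hnext
  simpa only [TCM.g, TCM.qi, TCM.ri, hqr] using reduced_fraction_mul_div hden hdvd heq

end Residue

lemma qi_pos_and_ri_pos (i : ℕ) : 0 < M.qi i ∧ 0 < M.ri i := by
  unfold TCM.qi TCM.ri TCM.qr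
  split
  · simp
  dsimp only
  split
  · simp
  exact ⟨Nat.div_gcd_pos_of_pos_left _ (by apply_rules [Nat.mul_pos, prm_pos, ite_prm_pos]),
    Nat.div_gcd_pos_of_pos_right _ (by apply_rules [Nat.mul_pos, prm_pos, ite_prm_pos])⟩

lemma run_eq_some {n : ℕ} {C : Config} (h : M.run n = some C) : C.1 < M.m ∧ C.2.2.2 = n := by
  induction n generalizing C with
  | zero =>
    cases Option.some_inj.1 h
    exact ⟨M.hm, rfl⟩
  | succ n ih =>
    obtain ⟨B, hB, hBC⟩ := Option.bind_eq_some_iff.1 h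
    obtain ⟨q', d1, d2, hstep, rfl⟩ := M.next_eq_some hBC
    exact ⟨(M.step_wf hstep).1, congrArg (· + 1) (ih hB).2⟩

lemma run_isSome (hM : ¬ M.Halts) (n : ℕ) : ∃ C, M.run n = some C := by
  induction n with
  | zero => exact ⟨_, rfl⟩
  | succ n ih =>
    obtain ⟨C, hC⟩ := ih
    cases hnext : M.next C with
    | none => exact absurd ⟨n, C, hC, hnext⟩ hM
    | some C' => exact ⟨C', by rw [TCM.run, hC, Option.bind_some, hnext]⟩

lemma gIter_eq_enc {t : ℕ} {C : Config} (h : M.run t = some C) : M.gIter t = M.enc C := by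
  induction t generalizing C with
  | zero =>
    cases Option.some_inj.1 h
    rfl
  | succ t ih =>
    obtain ⟨⟨q, c1, c2, tm⟩, hB, hBC⟩ := Option.bind_eq_some_iff.1 h
    rw [TCM.gIter, Function.iterate_succ_apply', ← TCM.gIter, ih hB]
    exact (M.g_enc (M.run_eq_some hB).1 hBC).2

lemma gIter_succ (hM : ¬ M.Halts) (t : ℕ) :
    M.ri (M.gIter t % M.p) ∣ M.gIter t ∧ M.g (M.gIter t) = M.gIter (t + 1) := by
  obtain ⟨⟨q, c1, c2, tm⟩, hC⟩ := M.run_isSome hM t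
  obtain ⟨C', hC'⟩ := M.run_isSome hM (t + 1)
  have hnext : M.next (q, c1, c2, tm) = some C' := by
    rwa [TCM.run, hC, Option.bind_some] at hC'
  rw [M.gIter_eq_enc hC, M.gIter_eq_enc hC']
  exact M.g_enc (M.run_eq_some hC).1 hnext

lemma lt_gIter (hM : ¬ M.Halts) (t : ℕ) : t < M.gIter t := by
  obtain ⟨⟨q, c1, c2, tm⟩, hC⟩ := M.run_isSome hM t
  obtain rfl : tm = t := (M.run_eq_some hC).2
  rw [M.gIter_eq_enc hC, enc_eq]
  calc tm < 2 ^ tm := Nat.lt_two_pow_self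
    _ ≤ prm (M.m + 2) ^ tm := Nat.pow_le_pow_left (prm_prime _).two_le _
    _ ≤ _ := Nat.le_mul_of_pos_left _ (by apply_rules [Nat.mul_pos, prm_pos, Nat.pow_pos])

end TCM

/-! ### Triggers and fair derivations -/

lemma mem_atomVarsF {a : Atom} {v : Var} : v ∈ atomVarsF a ↔ Sum.inr v ∈ a.2 := by
  simp [atomVarsF, Sum.getRight?_eq_some_iff]

lemma mem_varsF {A : Finset Atom} {v : Var} : v ∈ varsF A ↔ ∃ a ∈ A, Sum.inr v ∈ a.2 := by
  simp [varsF, mem_atomVarsF]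

@[simp] lemma applyT_vt (σ : Subst) (n : ℕ) : applyT σ (vt n) = σ (Sum.inl n) := rfl

lemma applyA_eq_self {σ : Subst} {a : Atom} (h : ∀ x ∈ a.2, applyT σ x = x) : applyA σ a = a :=
  Prod.ext rfl ((List.map_congr_left h).trans (List.map_id' _))

lemma adom_union (J K : Set Atom) : adom (J ∪ K) = adom J ∪ adom K := by
  ext x
  simp only [adom, Set.mem_union, Set.mem_ofPred_eq, or_and_right, exists_or]

namespace Trigger

lemma isOn.mono {t : Trigger} {J K : Set Atom} (ht : t.isOn J) (h : J ⊆ K) : t.isOn K :=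
  fun a ha => h (ht a ha)

lemma sub_mem_adom {t : Trigger} {J : Set Atom} (ht : t.isOn J) {v : Var}
    (hv : v ∈ varsF t.rule.1) : t.sub v ∈ adom J := by
  obtain ⟨a, ha, hva⟩ := mem_varsF.1 hv
  exact ⟨applyA t.sub a, ht a ha, List.mem_map_of_mem (f := applyT t.sub) hva⟩

lemma extSub_of_mem {t : Trigger} {v : Var} (hv : v ∈ varsF t.rule.1) : t.extSub v = t.sub v :=
  if_pos hv

lemma extSub_congr {t t' : Trigger} (hr : t.rule = t'.rule)
    (hs : ∀ v ∈ varsF t.rule.1, t.sub v = t'.sub v) : t.extSub = t'.extSub := by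
  have hcode : t.code = t'.code := by
    rw [Trigger.code, Trigger.code, ← hr, Finset.image_congr fun v hv => by rw [hs v hv]]
  funext v
  by_cases hv : v ∈ varsF t.rule.1
  · rw [extSub_of_mem hv, extSub_of_mem (hr ▸ hv), hs v hv]
  · rw [Trigger.extSub, Trigger.extSub, if_neg hv, if_neg (hr ▸ hv), hcode]

lemma sub_eq_of_code_eq {t t' : Trigger} (h : t.code = t'.code) {v : Var}
    (hv : v ∈ varsF t.rule.1) : t.sub v = t'.sub v := by
  obtain ⟨-, himg⟩ := Prod.mk.inj (Encodable.encode_injective h)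
  have hmem : (v, t.sub v) ∈ (varsF t'.rule.1).image fun v => (v, t'.sub v) :=
    himg ▸ Finset.mem_image_of_mem _ hv
  obtain ⟨v', -, hv'⟩ := Finset.mem_image.1 hmem
  obtain ⟨rfl, h⟩ := Prod.mk.inj hv'
  exact h.symm

end Trigger

def TriggerClosed (Rset : Finset Rule) (J : Set Atom) : Prop :=
  ∀ t : Trigger, t.rule ∈ Rset → t.isOn J → (t.out : Set Atom) ⊆ J

namespace Deriv

variable {Rset : Finset Rule} {I : Set Atom} (D : Deriv Rset I)

lemma inst_mono : Monotone D.inst :=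
  monotone_nat_of_le_succ fun _ => Set.subset_union_left

lemma inst_subset_res (n : ℕ) : D.inst n ⊆ D.res := Set.subset_iUnion D.inst n

lemma exists_isOn_inst {t : Trigger} (ht : t.isOn D.res) : ∃ n, t.isOn (D.inst n) := by
  obtain ⟨n, hn⟩ := D.inst_mono.directed_le.exists_mem_subset_of_finset_subset_biUnion
    (s := t.rule.1.image (applyA t.sub)) (by
      intro a ha
      obtain ⟨b, hb, rfl⟩ := Finset.mem_image.1 ha
      exact ht b hb)
  exact ⟨n, fun a ha => hn (Finset.mem_image_of_mem _ ha)⟩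

lemma triggerClosed_res {X : ChaseVariant} (hfair : D.Fair X)
    (hstable : ∀ n (t : Trigger), t.rule ∈ Rset → t.isOn (D.inst n) →
      ¬ Applicable X t (D.inst n) → (t.out : Set Atom) ⊆ D.inst n) :
    TriggerClosed Rset D.res := by
  intro t hR ht
  obtain ⟨n, hn⟩ := D.exists_isOn_inst ht
  by_cases happ : Applicable X t (D.inst n)
  · obtain ⟨k, hnk, hk⟩ := hfair n t hR hn happ
    exact (hstable k t hR (hn.mono (D.inst_mono hnk.le)) hk).trans (D.inst_subset_res k)
  · exact (hstable n t hR hn happ).trans (D.inst_subset_res n)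

end Deriv

-- These rules can neither create terms nor disturb the `S₀`-chain.
def IsTameDatalog (R : Rule) : Prop :=
  ∀ h ∈ R.2, h.1 ≠ pEnd ∧ h.1 ≠ pS0 ∧ ∀ x ∈ h.2, ∃ v ∈ varsF R.1, x = Sum.inr v

lemma Trigger.applyA_extSub_of_tame {t : Trigger} (hR : IsTameDatalog t.rule) {h : Atom}
    (hh : h ∈ t.rule.2) : applyA t.extSub h = applyA t.sub h := by
  refine Prod.ext rfl (List.map_congr_left fun x hx => ?_)
  obtain ⟨v, hv, rfl⟩ := (hR h hh).2.2 x hx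
  exact Trigger.extSub_of_mem hv

lemma TriggerClosed.head_mem {Rset : Finset Rule} {J : Set Atom} (hJ : TriggerClosed Rset J)
    {R : Rule} (hR : R ∈ Rset) (hRt : IsTameDatalog R) {σ : Subst}
    (hbody : ∀ a ∈ R.1, applyA σ a ∈ J) {h : Atom} (hh : h ∈ R.2) : applyA σ h ∈ J := by
  have := hJ ⟨R, σ⟩ hR hbody (Finset.mem_coe.2 (Finset.mem_image_of_mem _ hh))
  rwa [Trigger.applyA_extSub_of_tame hRt hh] at this

/-! ### The rules of `R_M` -/

lemma varsF_mono {A B : Finset Atom} (h : A ⊆ B) : varsF A ⊆ varsF B :=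
  Finset.biUnion_subset_biUnion_of_subset_left _ h

lemma mem_spath {a b base n : ℕ} {x : Atom} :
    x ∈ spath a b base n ↔
      ∃ j < n, x = (pS, [pathVar a b base n j, pathVar a b base n (j + 1)]) := by
  simp [spath, eq_comm]

lemma inl_start_mem_varsF_spath (a b base : ℕ) {n : ℕ} (hn : 0 < n) :
    Sum.inl a ∈ varsF (spath a b base n) :=
  mem_varsF.2 ⟨_, mem_spath.2 ⟨0, hn, rfl⟩, by simp [pathVar, vt]⟩

lemma inl_end_mem_varsF_spath (a b base : ℕ) {n : ℕ} (hn : 0 < n) :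
    Sum.inl b ∈ varsF (spath a b base n) :=
  mem_varsF.2 ⟨_, mem_spath.2 ⟨n - 1, by omega, rfl⟩,
    by simp [Nat.sub_add_cancel hn, pathVar, vt, hn.ne']⟩

section Rules

variable (M : TCM)

lemma ruleS_mem : ruleS ∈ RM M := by simp [RM]
lemma ruleFloodProp_mem : ruleFloodProp ∈ RM M := by simp [RM]
lemma ruleSEnd_mem : ruleSEnd ∈ RM M := by simp [RM]
lemma ruleGInit_mem : ruleGInit ∈ RM M := by simp [RM]
lemma ruleFloodGen_mem : ruleFloodGen M ∈ RM M := by simp [RM]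
lemma ruleEx_mem : ruleEx M ∈ RM M := by simp [RM]

lemma ruleR_mem {i : ℕ} (hi : i < M.p) : ruleR M i ∈ RM M := by
  simp only [RM, Finset.mem_union, Finset.mem_biUnion, Finset.mem_range]
  exact Or.inr ⟨i, hi, by simp⟩

lemma ruleT_mem {i : ℕ} (hi : i < M.p) : ruleT M i ∈ RM M := by
  simp only [RM, Finset.mem_union, Finset.mem_biUnion, Finset.mem_range]
  exact Or.inr ⟨i, hi, by simp⟩

lemma ruleGStep_mem {i : ℕ} (hi : i < M.p) : ruleGStep i ∈ RM M := by
  simp only [RM, Finset.mem_union, Finset.mem_biUnion, Finset.mem_range]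
  exact Or.inr ⟨i, hi, by simp⟩

lemma isTameDatalog_ruleS : IsTameDatalog ruleS := by
  simp [IsTameDatalog, ruleS, mem_varsF, vt, pS, pEnd, pS0]

lemma isTameDatalog_ruleFloodProp : IsTameDatalog ruleFloodProp := by
  simp [IsTameDatalog, ruleFloodProp, mem_varsF, vt, pFlood, pEnd, pS0]

lemma isTameDatalog_ruleSEnd : IsTameDatalog ruleSEnd := by
  simp [IsTameDatalog, ruleSEnd, mem_varsF, vt, pS, pEnd, pS0]

lemma isTameDatalog_ruleGInit : IsTameDatalog ruleGInit := by
  have h0 := inl_start_mem_varsF_spath 0 1 10 (n := 2) (by norm_num)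
  have h1 := inl_end_mem_varsF_spath 0 1 10 (n := 2) (by norm_num)
  simp only [IsTameDatalog, ruleGInit, Finset.mem_singleton, forall_eq]
  refine ⟨by decide, by decide, ?_⟩
  simp only [List.mem_cons, List.not_mem_nil, or_false]
  rintro x (rfl | rfl)
  exacts [⟨_, h0, rfl⟩, ⟨_, h1, rfl⟩]

lemma isTameDatalog_ruleR (i : ℕ) : IsTameDatalog (ruleR M i) := by
  simp [IsTameDatalog, ruleR, mem_varsF, vt, pR, pEnd, pS0]
  omega

lemma isTameDatalog_ruleT (i : ℕ) : IsTameDatalog (ruleT M i) := by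
  have h0 : Sum.inl 0 ∈ varsF (ruleT M i).1 :=
    mem_varsF.2 ⟨(pT i, [vt 0, vt 1, vt 2]), by simp [ruleT], by simp [vt]⟩
  have h3 : Sum.inl 3 ∈ varsF (ruleT M i).1 :=
    varsF_mono (Finset.subset_union_right.trans Finset.subset_union_left)
    (inl_end_mem_varsF_spath 1 3 10 (M.qi_pos_and_ri_pos i).2)
  have h4 : Sum.inl 4 ∈ varsF (ruleT M i).1 := varsF_mono Finset.subset_union_right
    (inl_end_mem_varsF_spath 2 4 (11 + M.ri i) (M.qi_pos_and_ri_pos i).1)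
  simp only [IsTameDatalog, ruleT, Finset.mem_singleton, forall_eq]
  refine ⟨by simp [pT, pEnd], by simp [pT, pS0]; omega, ?_⟩
  simp only [List.mem_cons, List.not_mem_nil, or_false]
  rintro x (rfl | rfl | rfl)
  exacts [⟨_, h0, rfl⟩, ⟨_, h3, rfl⟩, ⟨_, h4, rfl⟩]

lemma isTameDatalog_ruleGStep (i : ℕ) : IsTameDatalog (ruleGStep i) := by
  simp [IsTameDatalog, ruleGStep, mem_varsF, vt, pG, pEnd, pS0]

lemma isTameDatalog_ruleFloodGen : IsTameDatalog (ruleFloodGen M) := by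
  simp [IsTameDatalog, ruleFloodGen, mem_varsF, vt, pG, pR, pT, pEnd, pS0]
  grind

lemma eq_ruleEx_or_isTameDatalog_of_mem_RM {R : Rule} (hR : R ∈ RM M) :
    R = ruleEx M ∨ IsTameDatalog R := by
  simp only [RM, Finset.mem_union, Finset.mem_insert, Finset.mem_singleton,
    Finset.mem_biUnion, Finset.mem_range] at hR
  rcases hR with (rfl | rfl | rfl | rfl | rfl | rfl) | ⟨i, -, rfl | rfl | rfl⟩
  exacts [Or.inr isTameDatalog_ruleS, Or.inr isTameDatalog_ruleFloodProp,
    Or.inr isTameDatalog_ruleSEnd, Or.inr isTameDatalog_ruleGInit,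
    Or.inr (isTameDatalog_ruleFloodGen M), Or.inl rfl, Or.inr (isTameDatalog_ruleR M i),
    Or.inr (isTameDatalog_ruleT M i), Or.inr (isTameDatalog_ruleGStep i)]

end Rules

/-! ### The chain of nulls -/

def listSubst (l : List FTerm) : Subst := Sum.elim (fun n => l.getD n wC) fun _ => wC

@[simp] lemma listSubst_inl (l : List FTerm) (n : ℕ) : listSubst l (Sum.inl n) = l.getD n wC := rfl

section ChainTerms

variable (M : TCM)

/-- The null that rule (9) invents for `x` when matched with `y ↦ y`, `z ↦ w`. -/
def chainSucc (y : FTerm) : FTerm :=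
  (Trigger.mk (ruleEx M) (listSubst [wC, y, wC])).extSub (Sum.inl 0)

def chainTerm : ℕ → FTerm
  | 0 => wC
  | k + 1 => chainSucc M (chainTerm k)

@[simp] lemma chainTerm_zero : chainTerm M 0 = wC := rfl

@[simp] lemma chainTerm_succ (k : ℕ) : chainTerm M (k + 1) = chainSucc M (chainTerm M k) := rfl

lemma varsF_ruleEx_body : varsF (ruleEx M).1 = {Sum.inl 1, Sum.inl 2} := by
  ext v
  simp only [mem_varsF, ruleEx, Finset.mem_insert, Finset.mem_singleton]
  aesop (add simp vt)

lemma chainSucc_eq (y : FTerm) :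
    chainSucc M y = Sum.inr (Sum.inr ((Trigger.mk (ruleEx M) (listSubst [wC, y, wC])).code,
      Encodable.encode (Sum.inl 0 : Var))) := by
  rw [chainSucc, Trigger.extSub, if_neg (by simp [varsF_ruleEx_body])]

lemma chainSucc_ne_wC (y : FTerm) : chainSucc M y ≠ wC := by
  simp [chainSucc_eq, wC, ct]

lemma chainSucc_injective : Function.Injective (chainSucc M) := by
  intro y y' h
  simp only [chainSucc_eq, Sum.inr.injEq, Prod.mk.injEq] at h
  simpa using Trigger.sub_eq_of_code_eq h.1 (v := Sum.inl 1) (by simp [varsF_ruleEx_body])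

lemma chainTerm_injective : Function.Injective (chainTerm M) := by
  intro a b h
  induction a generalizing b with
  | zero => cases b with
    | zero => rfl
    | succ b => exact absurd h.symm (chainSucc_ne_wC M _)
  | succ a ih => cases b with
    | zero => exact absurd h (chainSucc_ne_wC M _)
    | succ b => exact congrArg (· + 1) (ih (chainSucc_injective M h))

variable {M}

lemma Trigger.extSub_ruleEx {t : Trigger} (hr : t.rule = ruleEx M) (h2 : t.sub (Sum.inl 2) = wC) :
    t.extSub (Sum.inl 0) = chainSucc M (t.sub (Sum.inl 1)) ∧
      t.extSub (Sum.inl 1) = t.sub (Sum.inl 1) := by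
  have hcongr : t.extSub = (Trigger.mk (ruleEx M) (listSubst [wC, t.sub (Sum.inl 1), wC])).extSub :=
    Trigger.extSub_congr hr (by simp [hr, varsF_ruleEx_body, h2])
  exact ⟨congrFun hcongr _, Trigger.extSub_of_mem (by simp [hr, varsF_ruleEx_body])⟩

lemma Trigger.mem_out_ruleEx {t : Trigger} (hr : t.rule = ruleEx M) (h2 : t.sub (Sum.inl 2) = wC)
    {a : Atom} : a ∈ t.out ↔
      a = (pS0, [chainSucc M (t.sub (Sum.inl 1)), t.sub (Sum.inl 1)]) ∨
      a = (pR 0, [chainSucc M (t.sub (Sum.inl 1)), chainSucc M (t.sub (Sum.inl 1))]) ∨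
      ∃ j < M.p, a = (pT j, [chainSucc M (t.sub (Sum.inl 1)), chainSucc M (t.sub (Sum.inl 1)),
        chainSucc M (t.sub (Sum.inl 1))]) := by
  obtain ⟨h0, h1⟩ := Trigger.extSub_ruleEx hr h2
  simp [Trigger.out, hr, ruleEx, applyA, h0, h1, eq_comm]

end ChainTerms

lemma Trigger.out_of_tame {t : Trigger} {J : Set Atom} (ht : t.isOn J) (hR : IsTameDatalog t.rule)
    {a : Atom} (ha : a ∈ t.out) : a.1 ≠ pEnd ∧ a.1 ≠ pS0 ∧ ∀ x ∈ a.2, x ∈ adom J := by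
  obtain ⟨h, hh, rfl⟩ := Finset.mem_image.1 ha
  obtain ⟨h1, h2, hargs⟩ := hR h hh
  refine ⟨h1, h2, fun x hx => ?_⟩
  obtain ⟨y, hy, rfl⟩ := List.mem_map.1 hx
  obtain ⟨v, hv, rfl⟩ := hargs y hy
  rw [applyT, Trigger.extSub_of_mem hv]
  exact t.sub_mem_adom ht hv

lemma Trigger.terms_out_ruleEx {M : TCM} {t : Trigger} (hr : t.rule = ruleEx M)
    (h2 : t.sub (Sum.inl 2) = wC) {a : Atom} (ha : a ∈ t.out) {x : FTerm} (hx : x ∈ a.2) :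
    x = chainSucc M (t.sub (Sum.inl 1)) ∨ x = t.sub (Sum.inl 1) := by
  rcases (Trigger.mem_out_ruleEx hr h2).1 ha with rfl | rfl | ⟨j, -, rfl⟩ <;> simp at hx <;> tauto

structure ChainInv (M : TCM) (J : Set Atom) : Prop where
  end_eq : ∀ l, ((pEnd, l) : Atom) ∈ J → l = [wC]
  exists_eq_chainTerm : ∀ x ∈ adom J, ∃ k, x = chainTerm M k
  S0_mem : ∀ k, chainTerm M (k + 1) ∈ adom J →
    ((pS0, [chainTerm M (k + 1), chainTerm M k]) : Atom) ∈ J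
  S0_eq : ∀ l, ((pS0, l) : Atom) ∈ J → ∃ k, l = [chainTerm M (k + 1), chainTerm M k]

namespace ChainInv

variable {M : TCM} {J : Set Atom} {t : Trigger}

lemma init : ChainInv M IE where
  end_eq l hl := (Prod.mk.inj hl).2
  exists_eq_chainTerm x := by
    rintro ⟨a, rfl, hx⟩
    exact ⟨0, by simpa using hx⟩
  S0_mem k := by
    rintro ⟨a, rfl, hx⟩
    exact absurd (by simpa using hx) (chainSucc_ne_wC M _)
  S0_eq l hl := absurd (Prod.mk.inj hl).1 (by decide)

lemma eq_chainTerm_succ (hI : ChainInv M J) {x : FTerm} {k : ℕ}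
    (h : ((pS0, [x, chainTerm M k]) : Atom) ∈ J) : x = chainTerm M (k + 1) := by
  obtain ⟨j, hj⟩ := hI.S0_eq _ h
  simp only [List.cons.injEq, and_true] at hj
  rw [hj.1, chainTerm_injective M hj.2.symm]

lemma sub_ruleEx (hI : ChainInv M J) (hr : t.rule = ruleEx M) (ht : t.isOn J) :
    t.sub (Sum.inl 2) = wC ∧ ∃ k, t.sub (Sum.inl 1) = chainTerm M k ∧ chainTerm M k ∈ adom J := by
  have hon : ∀ a ∈ (ruleEx M).1, applyA t.sub a ∈ J := hr ▸ ht
  refine ⟨by simpa [applyA] using hI.end_eq _ (hon (pEnd, [vt 2]) (by simp [ruleEx])), ?_⟩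
  have h1 : t.sub (Sum.inl 1) ∈ adom J :=
    ⟨_, hon (pG, [vt 1, vt 2]) (by simp [ruleEx]), by simp [applyA]⟩
  obtain ⟨k, hk⟩ := hI.exists_eq_chainTerm _ h1
  exact ⟨k, hk, hk ▸ h1⟩

lemma applyT_eq_self (hI : ChainInv M J) {σ : Subst} (hσ : IsHomOn σ J J) {x : FTerm} (hx : x ∈ adom J) :
    applyT σ x = x := by
  obtain ⟨k, rfl⟩ := hI.exists_eq_chainTerm x hx
  induction k with
  | zero => rfl
  | succ k ih =>
    have hS0 := hI.S0_mem k hx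
    have hk : applyT σ (chainTerm M k) = chainTerm M k := ih ⟨_, hS0, by simp⟩
    exact hI.eq_chainTerm_succ (by simpa [applyA, hk] using hσ _ hS0)

lemma union_out_of_tame (hI : ChainInv M J) (ht : t.isOn J) (hR : IsTameDatalog t.rule) :
    ChainInv M (J ∪ t.out) := by
  have hout := fun a (ha : a ∈ t.out) => Trigger.out_of_tame ht hR ha
  have hadom : adom (J ∪ t.out) = adom J := by
    rw [adom_union, Set.union_eq_left]
    rintro x ⟨a, ha, hx⟩
    exact (hout a ha).2.2 x hx
  refine ⟨fun l hl => ?_, hadom ▸ hI.exists_eq_chainTerm,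
    fun k hk => Or.inl (hI.S0_mem k (hadom ▸ hk)), fun l hl => ?_⟩
  · rcases hl with hl | hl
    exacts [hI.end_eq l hl, absurd rfl (hout _ hl).1]
  · rcases hl with hl | hl
    exacts [hI.S0_eq l hl, absurd rfl (hout _ hl).2.1]

lemma union_out_ruleEx (hI : ChainInv M J) (hr : t.rule = ruleEx M) (ht : t.isOn J) :
    ChainInv M (J ∪ t.out) := by
  obtain ⟨h2, k, hk, hkJ⟩ := hI.sub_ruleEx hr ht
  have hout : ∀ a, a ∈ t.out ↔ _ := fun a => Trigger.mem_out_ruleEx hr h2 (a := a)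
  have hterms := fun a (ha : a ∈ t.out) x (hx : x ∈ a.2) => Trigger.terms_out_ruleEx hr h2 ha hx
  simp only [hk, ← chainTerm_succ] at hout hterms
  refine ⟨fun l hl => ?_, fun x hx => ?_, fun k' hk' => ?_, fun l hl => ?_⟩
  · rcases hl with hl | hl
    · exact hI.end_eq l hl
    · rcases (hout _).1 hl with h | h | ⟨j, -, h⟩ <;>
        simp only [Prod.mk.injEq, pEnd, pS0, pR, pT] at h <;> omega
  · rcases hx with ⟨a, ha | ha, hx⟩
    · exact hI.exists_eq_chainTerm x ⟨a, ha, hx⟩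
    · rcases hterms a ha x hx with rfl | rfl
      exacts [⟨_, rfl⟩, ⟨_, rfl⟩]
  · rw [adom_union] at hk'
    rcases hk' with hk' | ⟨a, ha, hx⟩
    · exact Or.inl (hI.S0_mem k' hk')
    rcases hterms a ha _ hx with h | h
    · obtain rfl : k' = k := by simpa using chainTerm_injective M h
      exact Or.inr ((hout _).2 (Or.inl rfl))
    · exact Or.inl (hI.S0_mem k' (h ▸ hkJ))
  · rcases hl with hl | hl
    · exact hI.S0_eq l hl
    · rcases (hout _).1 hl with h | h | ⟨j, -, h⟩
      · exact ⟨k, (Prod.mk.inj h).2⟩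
      all_goals simp only [Prod.mk.injEq, pS0, pR, pT] at h; omega

lemma inst (D : Deriv (RM M) IE) (n : ℕ) : ChainInv M (D.inst n) := by
  induction n with
  | zero => exact ChainInv.init
  | succ n ih =>
    change ChainInv M (instSeq IE D.steps n ∪ _)
    cases hs : D.steps n with
    | none => simp only [Set.union_empty]; exact ih
    | some t =>
      obtain ⟨hR, ht, -⟩ := D.valid n t hs
      rcases eq_ruleEx_or_isTameDatalog_of_mem_RM M hR with hr | htame
      exacts [ih.union_out_ruleEx hr ht, ih.union_out_of_tame ht htame]

lemma out_subset_of_hom (hI : ChainInv M J) (hR : t.rule ∈ RM M) (ht : t.isOn J) {σ : Subst}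
    (hσ : IsHomOn σ (J ∪ t.out) J) : (t.out : Set Atom) ⊆ J := by
  have hσJ : IsHomOn σ J J := fun a ha => hσ a (Or.inl ha)
  suffices hfix : ∀ a ∈ t.out, ∀ x ∈ a.2, applyT σ x = x from
    fun a ha => applyA_eq_self (hfix a ha) ▸ hσ a (Or.inr ha)
  rcases eq_ruleEx_or_isTameDatalog_of_mem_RM M hR with hr | htame
  · obtain ⟨h2, k, hk, hkJ⟩ := hI.sub_ruleEx hr ht
    have hfix : applyT σ (chainTerm M k) = chainTerm M k := hI.applyT_eq_self hσJ hkJ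
    have hS0 : ((pS0, [chainTerm M (k + 1), chainTerm M k]) : Atom) ∈ t.out :=
      (Trigger.mem_out_ruleEx hr h2).2 (Or.inl (by rw [hk, chainTerm_succ]))
    have hfix' : applyT σ (chainTerm M (k + 1)) = chainTerm M (k + 1) :=
      hI.eq_chainTerm_succ (by simpa [applyA, hfix] using hσ _ (Or.inr hS0))
    intro a ha x hx
    rcases Trigger.terms_out_ruleEx hr h2 ha hx with rfl | rfl <;> simp_all
  · exact fun a ha x hx => hI.applyT_eq_self hσJ ((Trigger.out_of_tame ht htame ha).2.2 x hx)

lemma out_eq_of_frontier (hI : ChainInv M J) (hR : t.rule ∈ RM M) (ht : t.isOn J) {t' : Trigger}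
    (hrr : t'.rule = t.rule) (ht' : t'.isOn J) (hfr : ∀ v ∈ frontierOf t.rule, t'.sub v = t.sub v) :
    t'.out = t.out := by
  rcases eq_ruleEx_or_isTameDatalog_of_mem_RM M hR with hr | htame
  · have h1 : t'.sub (Sum.inl 1) = t.sub (Sum.inl 1) :=
      hfr _ (by simp [frontierOf, hr, mem_varsF, ruleEx, vt])
    have h2 := (hI.sub_ruleEx hr ht).1
    have h2' := (hI.sub_ruleEx (hrr.trans hr) ht').1
    have hext : t'.extSub = t.extSub := Trigger.extSub_congr hrr (by
      rw [hrr, hr, varsF_ruleEx_body]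
      simp [h1, h2, h2'])
    rw [Trigger.out, Trigger.out, hext, hrr]
  · rw [Trigger.out, Trigger.out, hrr]
    refine Finset.image_congr fun h hh => ?_
    rw [Trigger.applyA_extSub_of_tame (hrr ▸ htame) (hrr ▸ hh),
      Trigger.applyA_extSub_of_tame htame hh]
    refine Prod.ext rfl (List.map_congr_left fun x hx => ?_)
    obtain ⟨v, hv, rfl⟩ := (htame h hh).2.2 x hx
    exact hfr v (Finset.mem_inter.2 ⟨hv, mem_varsF.2 ⟨h, hh, hx⟩⟩)

lemma out_subset_of_not_applicable (hI : ChainInv M J) (hR : t.rule ∈ RM M) (ht : t.isOn J)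
    {X : ChaseVariant} (h : ¬ Applicable X t J) : (t.out : Set Atom) ⊆ J := by
  cases X with
  | O => exact not_not.1 h
  | SO =>
    simp only [Applicable, not_forall, not_not] at h
    obtain ⟨t', hrr, ht', hfr, hsub⟩ := h
    rwa [hI.out_eq_of_frontier hR ht hrr ht' hfr] at hsub
  | R =>
    obtain ⟨σ, hσ, -⟩ := not_not.1 h
    exact hI.out_subset_of_hom hR ht hσ
  | E =>
    obtain ⟨σ, hσ⟩ := not_not.1 h
    exact hI.out_subset_of_hom hR ht hσ

end ChainInv

lemma Deriv.triggerClosed_res_RM {M : TCM} {X : ChaseVariant} (D : Deriv (RM M) IE)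
    (hfair : D.Fair X) : TriggerClosed (RM M) D.res :=
  D.triggerClosed_res hfair fun n _ hR ht h =>
    (ChainInv.inst D n).out_subset_of_not_applicable hR ht h

/-! ### Simulating `M` in a trigger-closed atom set -/

section Simulation

variable {M : TCM} {J : Set Atom}

lemma S_of_S0 (hJ : TriggerClosed (RM M) J) {x y : FTerm} (h : ((pS0, [x, y]) : Atom) ∈ J) :
    ((pS, [x, y]) : Atom) ∈ J := by
  simpa [applyA] using hJ.head_mem (ruleS_mem M) isTameDatalog_ruleS (σ := listSubst [x, y])
    (by simpa [ruleS, applyA] using h) (h := (pS, [vt 0, vt 1])) (by simp [ruleS])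

lemma flood_of_S (hJ : TriggerClosed (RM M) J) {x y : FTerm} (h : ((pS, [x, y]) : Atom) ∈ J) :
    ((pFlood, [y]) : Atom) ∈ J := by
  simpa [applyA] using hJ.head_mem (ruleFloodProp_mem M) isTameDatalog_ruleFloodProp
    (σ := listSubst [x, y]) (by simpa [ruleFloodProp, applyA] using h) (h := (pFlood, [vt 1]))
    (by simp [ruleFloodProp])

lemma S_wC_wC (hJ : TriggerClosed (RM M) J) (hE : ((pEnd, [wC]) : Atom) ∈ J) :
    ((pS, [wC, wC]) : Atom) ∈ J := by
  simpa [applyA] using hJ.head_mem (ruleSEnd_mem M) isTameDatalog_ruleSEnd (σ := listSubst [wC])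
    (by simpa [ruleSEnd, applyA] using hE) (h := (pS, [vt 0, vt 0])) (by simp [ruleSEnd])

lemma R_T_of_flood (hJ : TriggerClosed (RM M) J) {x y z : FTerm}
    (hx : ((pFlood, [x]) : Atom) ∈ J) (hy : ((pFlood, [y]) : Atom) ∈ J)
    (hz : ((pFlood, [z]) : Atom) ∈ J) {j : ℕ} (hj : j < M.p) :
    ((pR j, [x, y]) : Atom) ∈ J ∧ ((pT j, [x, y, z]) : Atom) ∈ J := by
  have hout := fun h => hJ.head_mem (ruleFloodGen_mem M) (isTameDatalog_ruleFloodGen M)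
    (σ := listSubst [x, y, z]) (by simp [ruleFloodGen, applyA, hx, hy, hz]) (h := h)
  have hhead : ∀ a ∈ ({(pR j, [vt 0, vt 1]), (pT j, [vt 0, vt 1, vt 2])} : Finset Atom),
      a ∈ (ruleFloodGen M).2 := fun a ha =>
    Finset.mem_union_right _ (Finset.mem_biUnion.2 ⟨j, Finset.mem_range.2 hj, ha⟩)
  exact ⟨by simpa [applyA] using hout _ (hhead (pR j, [vt 0, vt 1]) (by simp)),
    by simpa [applyA] using hout _ (hhead (pT j, [vt 0, vt 1, vt 2]) (by simp))⟩

lemma R_succ (hJ : TriggerClosed (RM M) J) {i : ℕ} (hi : i < M.p) {x y z : FTerm}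
    (h1 : ((pR i, [x, y]) : Atom) ∈ J) (h2 : ((pS, [y, z]) : Atom) ∈ J) :
    ((pR ((i + 1) % M.p), [x, z]) : Atom) ∈ J := by
  simpa [applyA] using hJ.head_mem (ruleR_mem M hi) (isTameDatalog_ruleR M i)
    (σ := listSubst [x, y, z]) (by simp [ruleR, applyA, h1, h2])
    (h := (pR ((i + 1) % M.p), [vt 0, vt 2])) (by simp [ruleR])

lemma G_step (hJ : TriggerClosed (RM M) J) {i : ℕ} (hi : i < M.p) {x y z : FTerm}
    (h1 : ((pG, [x, y]) : Atom) ∈ J) (h2 : ((pR i, [x, y]) : Atom) ∈ J)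
    (h3 : ((pT i, [x, y, z]) : Atom) ∈ J) : ((pG, [x, z]) : Atom) ∈ J := by
  simpa [applyA] using hJ.head_mem (ruleGStep_mem M hi) (isTameDatalog_ruleGStep i)
    (σ := listSubst [x, y, z]) (by simp [ruleGStep, applyA, h1, h2, h3])
    (h := (pG, [vt 0, vt 2])) (by simp [ruleGStep])

lemma spath_hom {σ : Subst} {f : ℕ → FTerm} {a b base n : ℕ}
    (hpath : ∀ s < n, ((pS, [f s, f (s + 1)]) : Atom) ∈ J)
    (hσ : ∀ s ≤ n, applyT σ (pathVar a b base n s) = f s) :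
    ∀ x ∈ spath a b base n, applyA σ x ∈ J := by
  intro x hx
  obtain ⟨s, hs, rfl⟩ := mem_spath.1 hx
  simpa [applyA, hσ s hs.le, hσ (s + 1) hs] using hpath s hs

/-- Truncated subtraction is intended in `u - 1`: below `w = chainTerm M 0` the chain continues
through the loop `S(w, w)`. -/
structure ChainReady (M : TCM) (J : Set Atom) (k : ℕ) : Prop where
  S_mem : ∀ u ≤ k, ((pS, [chainTerm M u, chainTerm M (u - 1)]) : Atom) ∈ J
  R0_mem : ((pR 0, [chainTerm M k, chainTerm M k]) : Atom) ∈ J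
  T_mem : ∀ j < M.p, ((pT j, [chainTerm M k, chainTerm M k, chainTerm M k]) : Atom) ∈ J

namespace ChainReady

variable {k : ℕ}

lemma S_sub (h : ChainReady M J k) {j : ℕ} (hj : j ≤ k) (s : ℕ) :
    ((pS, [chainTerm M (j - s), chainTerm M (j - (s + 1))]) : Atom) ∈ J := by
  simpa [Nat.sub_sub] using h.S_mem (j - s) (by omega)

lemma G_sub_two (h : ChainReady M J k) (hJ : TriggerClosed (RM M) J) :
    ((pG, [chainTerm M k, chainTerm M (k - 2)]) : Atom) ∈ J := by
  let σ : Subst := Sum.elim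
    (fun n => chainTerm M (if n = 0 then k else if n = 1 then k - 2 else k - 1)) fun _ => wC
  have hbody : ∀ a ∈ ruleGInit.1, applyA σ a ∈ J :=
    spath_hom (f := fun s => chainTerm M (k - s)) (fun s _ => h.S_sub le_rfl s) fun s hs => by
      interval_cases s <;> simp [pathVar, σ]
  simpa [applyA, σ] using hJ.head_mem (ruleGInit_mem M) isTameDatalog_ruleGInit hbody
    (h := (pG, [vt 0, vt 1])) (by simp [ruleGInit])

lemma T_step (h : ChainReady M J k) (hJ : TriggerClosed (RM M) J) {i : ℕ} (hi : i < M.p)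
    {j₁ j₂ : ℕ} (hj₁ : j₁ ≤ k) (hj₂ : j₂ ≤ k)
    (hT : ((pT i, [chainTerm M k, chainTerm M j₁, chainTerm M j₂]) : Atom) ∈ J) :
    ((pT i, [chainTerm M k, chainTerm M (j₁ - M.ri i), chainTerm M (j₂ - M.qi i)]) : Atom) ∈ J := by
  -- `σ` maps the two `S`-paths of the body onto the chain below `chainTerm M j₁`, `chainTerm M j₂`.
  let σ : Subst := Sum.elim (fun n => chainTerm M
    (if n = 0 then k else if n = 1 then j₁ else if n = 2 then j₂ else if n = 3 then j₁ - M.ri i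
      else if n = 4 then j₂ - M.qi i else if n ≤ 10 + M.ri i then j₁ - (n - 10)
      else j₂ - (n - (11 + M.ri i))))
    fun _ => wC
  have hbody : ∀ a ∈ (ruleT M i).1, applyA σ a ∈ J := by
    simp only [ruleT, Finset.mem_union, Finset.mem_singleton]
    rintro a ((rfl | ha) | ha)
    · simpa [applyA, σ] using hT
    · refine spath_hom (f := fun s => chainTerm M (j₁ - s)) (fun s _ => h.S_sub hj₁ s)
        (fun s hs => ?_) a ha
      simp only [pathVar]
      split_ifs <;> simp only [σ, applyT_vt, Sum.elim_inl] <;> congr 1 <;> simp <;>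
        (try split_ifs) <;> omega
    · refine spath_hom (f := fun s => chainTerm M (j₂ - s)) (fun s _ => h.S_sub hj₂ s)
        (fun s hs => ?_) a ha
      simp only [pathVar]
      split_ifs <;> simp only [σ, applyT_vt, Sum.elim_inl] <;> congr 1 <;> simp <;>
        (try split_ifs) <;> omega
  simpa [applyA, σ] using hJ.head_mem (ruleT_mem M hi) (isTameDatalog_ruleT M i) hbody
    (h := (pT i, [vt 0, vt 3, vt 4])) (by simp [ruleT])

lemma R_sub (h : ChainReady M J k) (hJ : TriggerClosed (RM M) J) (d : ℕ) :
    ((pR (d % M.p), [chainTerm M k, chainTerm M (k - d)]) : Atom) ∈ J := by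
  induction d with
  | zero => simpa using h.R0_mem
  | succ d ih =>
    rw [Nat.add_mod, Nat.mod_eq_of_lt M.one_lt_p]
    exact R_succ hJ (Nat.mod_lt d M.p_pos) ih (h.S_sub le_rfl d)

lemma T_sub (h : ChainReady M J k) (hJ : TriggerClosed (RM M) J) {i : ℕ} (hi : i < M.p) (a : ℕ) :
    ((pT i, [chainTerm M k, chainTerm M (k - a * M.ri i), chainTerm M (k - a * M.qi i)]) : Atom) ∈
      J := by
  induction a with
  | zero => simpa using h.T_mem i hi
  | succ a ih => simpa [Nat.sub_sub, add_mul] using h.T_step hJ hi (by omega) (by omega) ih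

lemma G_sub_gIter (h : ChainReady M J k) (hJ : TriggerClosed (RM M) J) (hM : ¬ M.Halts) (t : ℕ) :
    ((pG, [chainTerm M k, chainTerm M (k - M.gIter t)]) : Atom) ∈ J := by
  induction t with
  | zero => exact h.G_sub_two hJ
  | succ t ih =>
    obtain ⟨hdvd, hg⟩ := M.gIter_succ hM t
    set n := M.gIter t
    have hi : n % M.p < M.p := Nat.mod_lt _ M.p_pos
    have hT := h.T_sub hJ hi (n / M.ri (n % M.p))
    rw [Nat.div_mul_cancel hdvd, mul_comm, ← Nat.mul_div_assoc _ hdvd, ← TCM.g, hg] at hT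
    exact G_step hJ hi ih (h.R_sub hJ n) hT

lemma succ (h : ChainReady M J k) (hJ : TriggerClosed (RM M) J) (hM : ¬ M.Halts)
    (hE : ((pEnd, [wC]) : Atom) ∈ J) : ChainReady M J (k + 1) := by
  have hG : ((pG, [chainTerm M k, wC]) : Atom) ∈ J := by
    simpa [Nat.sub_eq_zero_of_le (M.lt_gIter hM k).le] using h.G_sub_gIter hJ hM k
  let t : Trigger := ⟨ruleEx M, listSubst [wC, chainTerm M k, wC]⟩
  have hout : (t.out : Set Atom) ⊆ J :=
    hJ t (ruleEx_mem M) (by simp [t, Trigger.isOn, IsHomOn, ruleEx, applyA, hG, hE])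
  have hmem := fun a => (Trigger.mem_out_ruleEx (t := t) rfl rfl (a := a)).2
  simp only [t, listSubst_inl] at hmem
  refine ⟨fun u hu => ?_, hout (hmem _ (Or.inr (Or.inl rfl))),
    fun j hj => hout (hmem _ (Or.inr (Or.inr ⟨j, hj, rfl⟩)))⟩
  rcases Nat.lt_or_eq_of_le hu with hu | rfl
  · exact h.S_mem u (by omega)
  · exact S_of_S0 hJ (hout (hmem _ (Or.inl rfl)))

lemma zero (hJ : TriggerClosed (RM M) J) (hE : ((pEnd, [wC]) : Atom) ∈ J) : ChainReady M J 0 := by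
  have hS := S_wC_wC hJ hE
  have hF := flood_of_S hJ hS
  refine ⟨fun u hu => ?_, (R_T_of_flood hJ hF hF hF M.p_pos).1,
    fun j hj => (R_T_of_flood hJ hF hF hF hj).2⟩
  obtain rfl : u = 0 := by omega
  exact hS

end ChainReady

lemma chainReady (hJ : TriggerClosed (RM M) J) (hM : ¬ M.Halts)
    (hE : ((pEnd, [wC]) : Atom) ∈ J) (k : ℕ) : ChainReady M J k := by
  induction k with
  | zero => exact ChainReady.zero hJ hE
  | succ k ih => exact ih.succ hJ hM hE

lemma R0_chainTerm (hJ : TriggerClosed (RM M) J) (hM : ¬ M.Halts)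
    (hE : ((pEnd, [wC]) : Atom) ∈ J) (a b : ℕ) :
    ((pR 0, [chainTerm M a, chainTerm M b]) : Atom) ∈ J := by
  have hF : ∀ k, ((pFlood, [chainTerm M k]) : Atom) ∈ J := fun k =>
    flood_of_S hJ (by simpa using (chainReady hJ hM hE (k + 1)).S_mem (k + 1) le_rfl)
  exact (R_T_of_flood hJ (hF a) (hF b) (hF a) M.p_pos).1

end Simulation

theorem stmt_8_general (M : TCM) (hM : ¬ M.Halts) (X : ChaseVariant)
    (D : Deriv (RM M) IE) (hfair : D.Fair X) :
    ∃ V : Set FTerm, V.Infinite ∧ V ⊆ adom D.res ∧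
      ∀ a ∈ V, ∀ b ∈ V, (pR 0, [a, b]) ∈ D.res := by
  have hJ := D.triggerClosed_res_RM hfair
  have hE : ((pEnd, [wC]) : Atom) ∈ D.res := D.inst_subset_res 0 rfl
  refine ⟨Set.range (chainTerm M), Set.infinite_range_of_injective (chainTerm_injective M), ?_, ?_⟩
  · rintro _ ⟨k, rfl⟩
    exact ⟨_, R0_chainTerm hJ hM hE k k, by simp⟩
  · rintro _ ⟨a, rfl⟩ _ ⟨b, rfl⟩
    exact R0_chainTerm hJ hM hE a b

/-- if `M` does not halt, the `R₀`-graph of the result of any fair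
`X`-derivation from `⟨R_M, {End(w)}⟩` contains an infinite clique. -/
theorem stmt_8 (M : TCM) (hM : ¬ M.Halts) (X : ChaseVariant)
    (D : Deriv (RM M) IE) (hX : D.IsX X) (hfair : D.Fair X) :
    ∃ V : Set FTerm, V.Infinite ∧ V ⊆ adom D.res ∧
      ∀ a ∈ V, ∀ b ∈ V, (pR 0, [a, b]) ∈ D.res :=
  stmt_8_general M hM X D hfair

end
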